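/- arXiv:1904.10122 — 2 statements merged into one kernel-verified Lean document; each statement's English description precedes it below -/
import Mathlib

section
/- Let X be a set, C a concept class on X, and H a hypothesis class with C ⊆ H ⊆ P(X). Suppose Ldim(C) = d < ∞ and SC(C, H) = 2. Then LC^EQ(C, H) = d + 1. -/
/-!
Definitions for query learning: concepts are total functions `X → Bool`,
partially specified subsets are functions `X → Option Bool`.
-/

/-- A total concept `f` extends the partially specified subset `A`
(i.e. agrees with `A` on its domain). -/
def PExtends {X : Type*} (f : X → Bool) (A : X → Option Bool) : Prop :=
  ∀ x b, A x = some b → f x = b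

/-- `A` is `n`-consistent with `C`: every restriction of `A` of size at most `n`
has an extension in `C`. -/
def NConsistent {X : Type*} (C : Set (X → Bool)) (A : X → Option Bool) (n : ℕ) : Prop :=
  ∀ s : Finset X, s.card ≤ n → ∃ f ∈ C, ∀ x ∈ s, ∀ b, A x = some b → f x = b

/-- `A` is finitely consistent with `C`: every finite restriction of `A`
has an extension in `C`. -/
def FinitelyConsistent {X : Type*} (C : Set (X → Bool)) (A : X → Option Bool) : Prop :=
  ∀ s : Finset X, ∃ f ∈ C, ∀ x ∈ s, ∀ b, A x = some b → f x = b

/-- There is a complete binary tree of height `d`, with internal nodes labelled by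
elements of `X` (here indexed by the binary path leading to the node), whose leaves
can each be properly labelled by a concept of `C` agreeing with the root-to-leaf path. -/
def LdimGe {X : Type*} (C : Set (X → Bool)) (d : ℕ) : Prop :=
  ∃ t : List Bool → X, ∀ σ : List Bool, σ.length = d →
    ∃ f ∈ C, ∀ k, k < d → f (t (σ.take k)) = σ.getD k false

/-- The Littlestone dimension of `C`, valued in `ℕ∞` (`⊤` = no maximum exists). -/
noncomputable def Ldim {X : Type*} (C : Set (X → Bool)) : ℕ∞ :=
  sSup {n : ℕ∞ | ∃ d : ℕ, n = d ∧ LdimGe C d}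

/-- `xs` is a valid sequence of counterexamples that an adversarial teacher with
target concept `A` can return against the learner strategy `s` (the learner's next
hypothesis is a function of the list of counterexamples received so far). -/
def ValidEQPlay {X : Type*} (A : X → Bool) (s : List X → (X → Bool)) (xs : List X) : Prop :=
  ∀ (i : ℕ) (h : i < xs.length),
    s (xs.take i) (xs.get ⟨i, h⟩) ≠ A (xs.get ⟨i, h⟩)

/-- Some learner strategy with hypotheses from `H` identifies every concept of `C`
in at most `n` equivalence queries, against every teacher. -/
def EQLearnIn {X : Type*} (C H : Set (X → Bool)) (n : ℕ) : Prop :=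
  ∃ s : List X → (X → Bool), (∀ l, s l ∈ H) ∧
    ∀ A ∈ C, ∀ xs : List X, ValidEQPlay A s xs → xs.length < n

/-- The equivalence-query learning complexity `LC^EQ(C, H)`, valued in `ℕ∞`. -/
noncomputable def LCEQ {X : Type*} (C H : Set (X → Bool)) : ℕ∞ :=
  sInf {n : ℕ∞ | ∃ m : ℕ, n = m ∧ EQLearnIn C H m}

/-- `xs` is a valid play of a teacher with target `A` against the EQ+MQ learner
strategy `s`: the history records pairs `(x, A x)`; at each step, if the learner
makes the membership query `x` the teacher answers `(x, A x)`, and if the learner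
makes an equivalence query `B` the teacher returns a counterexample to `B`. -/
def ValidEMPlay {X : Type*} (A : X → Bool) (s : List (X × Bool) → X ⊕ (X → Bool))
    (xs : List (X × Bool)) : Prop :=
  ∀ (i : ℕ) (h : i < xs.length),
    (xs.get ⟨i, h⟩).2 = A (xs.get ⟨i, h⟩).1 ∧
    (∀ x, s (xs.take i) = Sum.inl x → (xs.get ⟨i, h⟩).1 = x) ∧
    (∀ B, s (xs.take i) = Sum.inr B → B (xs.get ⟨i, h⟩).1 ≠ A (xs.get ⟨i, h⟩).1)

/-- Some learner strategy making membership queries on elements of `X` and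
equivalence queries from `H` identifies every concept of `C` in at most `n`
queries in total, against every teacher. -/
def EMLearnIn {X : Type*} (C H : Set (X → Bool)) (n : ℕ) : Prop :=
  ∃ s : List (X × Bool) → X ⊕ (X → Bool),
    (∀ l B, s l = Sum.inr B → B ∈ H) ∧
    ∀ A ∈ C, ∀ xs : List (X × Bool), ValidEMPlay A s xs → xs.length < n

/-- The EQ+MQ learning complexity `LC^{EQ+MQ}(C, H)`, valued in `ℕ∞`. -/
noncomputable def LCEM {X : Type*} (C H : Set (X → Bool)) : ℕ∞ :=
  sInf {n : ℕ∞ | ∃ m : ℕ, n = m ∧ EMLearnIn C H m}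

/-- Every total function `X → Bool` that is `n`-consistent with `C` belongs to `H`. -/
def CDimLe {X : Type*} (C H : Set (X → Bool)) (n : ℕ) : Prop :=
  ∀ A : X → Bool, NConsistent C (fun x => some (A x)) n → A ∈ H

/-- The consistency dimension `C(C, H)`, valued in `ℕ∞`. -/
noncomputable def CDim {X : Type*} (C H : Set (X → Bool)) : ℕ∞ :=
  sInf {n : ℕ∞ | ∃ m : ℕ, n = m ∧ CDimLe C H m}

/-- Every partially specified subset that is `n`-consistent with `C` has a total
extension in `H`. -/
def SCDimLe {X : Type*} (C H : Set (X → Bool)) (n : ℕ) : Prop :=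
  ∀ A : X → Option Bool, NConsistent C A n → ∃ B ∈ H, PExtends B A

/-- The strong consistency dimension `SC(C, H)`, valued in `ℕ∞`. -/
noncomputable def SCDim {X : Type*} (C H : Set (X → Bool)) : ℕ∞ :=
  sInf {n : ℕ∞ | ∃ m : ℕ, n = m ∧ SCDimLe C H m}

/-!
Upper bound: Littlestone's Standard Optimal Algorithm. In a version space `V` of finite
Littlestone dimension, at most one label `b` at a point `x` keeps the dimension of
`{f ∈ V | f x = b}` equal to that of `V`. These labels form a partial concept that is
2-consistent with `C`: if two of them could not be realised together, the restriction for the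
first would lie inside the restriction for the opposite of the second, so both labels at the
second point would keep the dimension. `SC(C, H) ≤ 2` completes this partial concept to a
hypothesis in `H`, and then every counterexample lowers the dimension of the version space, so
at most `d` counterexamples occur. Lower bound: a teacher walking down a Littlestone tree of
height `d`, always along the branch the current hypothesis gets wrong, returns `d`
counterexamples.
-/

section Order

variable {P : ℕ → Prop}

lemma sInf_natSet_eq_coe_iff {n : ℕ} :
    sInf {x : ℕ∞ | ∃ m : ℕ, x = m ∧ P m} = n ↔ P n ∧ ∀ m < n, ¬P m := by
  set S := {x : ℕ∞ | ∃ m : ℕ, x = m ∧ P m}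
  have hle : ∀ {m}, P m → sInf S ≤ m := fun hm => sInf_le ⟨_, rfl, hm⟩
  constructor
  · intro h
    have hS : S.Nonempty := Set.nonempty_iff_ne_empty.2 fun hS => by simp [hS] at h
    obtain ⟨m, hm, hPm⟩ := csInf_mem hS
    rw [h, Nat.cast_inj] at hm
    refine ⟨hm ▸ hPm, fun k hk hPk => ?_⟩
    have := h ▸ hle hPk
    exact absurd (Nat.cast_le.1 this) (not_le.2 hk)
  · rintro ⟨hn, hlt⟩
    refine le_antisymm (hle hn) (le_sInf ?_)
    rintro _ ⟨m, rfl, hm⟩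
    exact Nat.cast_le.2 (not_lt.1 fun h => hlt m h hm)

lemma sSup_natSet_eq_coe {n : ℕ} (h : sSup {x : ℕ∞ | ∃ m : ℕ, x = m ∧ P m} = n)
    (hP : ∃ m, P m) : P n ∧ ∀ m > n, ¬P m := by
  set S := {x : ℕ∞ | ∃ m : ℕ, x = m ∧ P m}
  have hge : ∀ {m}, P m → (m : ℕ∞) ≤ sSup S := fun hm => le_sSup ⟨_, rfl, hm⟩
  obtain ⟨m₀, hm₀⟩ := hP
  have : Nonempty S := ⟨⟨m₀, m₀, rfl, hm₀⟩⟩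
  obtain ⟨m, hm, hPm⟩ := ENat.sSup_mem_of_nonempty_of_lt_top (h ▸ ENat.natCast_lt_top n)
  rw [h, Nat.cast_inj] at hm
  refine ⟨hm ▸ hPm, fun k hk hPk => ?_⟩
  have := h ▸ hge hPk
  exact absurd (Nat.cast_le.1 this) (not_le.2 hk)

end Order

section Littlestone

variable {X : Type*} {V W : Set (X → Bool)} {k n : ℕ}

lemma LdimGe.mono (hVW : V ⊆ W) (h : LdimGe V k) : LdimGe W k := by
  obtain ⟨t, ht⟩ := h
  refine ⟨t, fun σ hσ => ?_⟩
  obtain ⟨f, hf, hft⟩ := ht σ hσ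
  exact ⟨f, hVW hf, hft⟩

lemma LdimGe.of_le (hnk : n ≤ k) (h : LdimGe V k) : LdimGe V n := by
  obtain ⟨t, ht⟩ := h
  refine ⟨t, fun σ hσ => ?_⟩
  obtain ⟨f, hf, hft⟩ := ht (σ ++ List.replicate (k - n) false) (by simp [hσ, hnk])
  refine ⟨f, hf, fun j hj => ?_⟩
  have := hft j (by omega)
  rwa [List.take_append_of_le_length (by omega), List.getD_append _ _ _ _ (by omega)] at this

lemma LdimGe.nonempty (h : LdimGe V k) : V.Nonempty := by
  obtain ⟨t, ht⟩ := h.of_le (Nat.zero_le k)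
  obtain ⟨f, hf, -⟩ := ht [] rfl
  exact ⟨f, hf⟩

lemma ldimGe_zero [Nonempty X] (hV : V.Nonempty) : LdimGe V 0 :=
  ⟨fun _ => Classical.arbitrary X, fun _ _ =>
    ⟨hV.some, hV.some_mem, fun _ h => absurd h (Nat.not_lt_zero _)⟩⟩

lemma pos_of_not_ldimGe [Nonempty X] (hV : V.Nonempty) (h : ¬LdimGe V k) : 0 < k :=
  Nat.pos_of_ne_zero <| by rintro rfl; exact h (ldimGe_zero hV)

def labelled (V : Set (X → Bool)) (x : X) (b : Bool) : Set (X → Bool) := {f ∈ V | f x = b}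

lemma labelled_subset (x : X) (b : Bool) : labelled V x b ⊆ V := fun _ hf => hf.1

lemma ldimGe_succ_iff : LdimGe V (k + 1) ↔ ∃ x, ∀ b, LdimGe (labelled V x b) k := by
  constructor
  · rintro ⟨t, ht⟩
    refine ⟨t [], fun b => ⟨fun σ => t (b :: σ), fun σ hσ => ?_⟩⟩
    obtain ⟨f, hf, hft⟩ := ht (b :: σ) (by simp [hσ])
    exact ⟨f, ⟨hf, by simpa using hft 0 (Nat.succ_pos k)⟩,
      fun j hj => by simpa using hft (j + 1) (by omega)⟩
  · rintro ⟨x, hx⟩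
    choose t ht using hx
    refine ⟨fun σ => match σ with | [] => x | b :: τ => t b τ, fun σ hσ => ?_⟩
    obtain _ | ⟨b, τ⟩ := σ
    · simp at hσ
    obtain ⟨f, ⟨hf, hfx⟩, hft⟩ := ht b τ (by simpa using hσ)
    refine ⟨f, hf, fun j hj => ?_⟩
    cases j with
    | zero => simpa using hfx
    | succ j => simpa using hft j (by simp at hσ; omega)

end Littlestone

lemma Finset.exists_subset_pair_of_card_le_two {α : Type*} [DecidableEq α] [Nonempty α]
    {s : Finset α} (hs : s.card ≤ 2) : ∃ x y, s ⊆ {x, y} := by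
  interval_cases h : s.card
  · obtain rfl := Finset.card_eq_zero.1 h
    exact ⟨Classical.arbitrary α, Classical.arbitrary α, Finset.empty_subset _⟩
  · obtain ⟨a, rfl⟩ := Finset.card_eq_one.1 h
    exact ⟨a, a, by simp⟩
  · obtain ⟨a, b, -, rfl⟩ := Finset.card_eq_two.1 h
    exact ⟨a, b, subset_rfl⟩

section SOA

variable {X : Type*} {C V : Set (X → Bool)} {k n : ℕ}

lemma nConsistent_two [Nonempty X] {A : X → Option Bool}
    (h : ∀ x y, ∃ f ∈ C, (∀ b, A x = some b → f x = b) ∧ (∀ b, A y = some b → f y = b)) :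
    NConsistent C A 2 := by
  classical
  intro s hs
  obtain ⟨x, y, hsxy⟩ := Finset.exists_subset_pair_of_card_le_two hs
  obtain ⟨f, hf, hfx, hfy⟩ := h x y
  refine ⟨f, hf, fun z hz => ?_⟩
  rcases Finset.mem_insert.1 (hsxy hz) with rfl | hz
  · exact hfx
  · exact (Finset.mem_singleton.1 hz) ▸ hfy

/-- Unlike `Ldim V ≤ Ldim W`, this separates `∅` from the classes of dimension `0`. -/
def LdimLE (V W : Set (X → Bool)) : Prop := ∀ k, LdimGe V k → LdimGe W k

lemma not_ldimLE_labelled_true_and_false (hV : V.Nonempty) (hbdd : ¬LdimGe V n) (x : X) :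
    ¬(LdimLE V (labelled V x true) ∧ LdimLE V (labelled V x false)) := by
  have : Nonempty X := ⟨x⟩
  rintro ⟨htrue, hfalse⟩
  refine hbdd (Nat.rec (ldimGe_zero hV) (fun k hk => ?_) n)
  exact ldimGe_succ_iff.2 ⟨x, fun b => b.rec (hfalse k hk) (htrue k hk)⟩

open Classical in
noncomputable def soaPrediction (V : Set (X → Bool)) (x : X) : Option Bool :=
  if LdimLE V (labelled V x true) then some true
  else if LdimLE V (labelled V x false) then some false else none

lemma soaPrediction_eq_some_iff (hV : V.Nonempty) (hbdd : ¬LdimGe V n) {x : X} {b : Bool} :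
    soaPrediction V x = some b ↔ LdimLE V (labelled V x b) := by
  have := not_ldimLE_labelled_true_and_false hV hbdd x
  unfold soaPrediction
  cases b <;> split_ifs <;> simp_all

lemma not_ldimGe_labelled (hbdd : ¬LdimGe V (k + 1)) {x : X} {c : Bool}
    (hc : soaPrediction V x ≠ some c) : ¬LdimGe (labelled V x c) k := by
  intro hk
  have hV := (hk.mono (labelled_subset x c)).nonempty
  obtain ⟨j, hj, hjc⟩ : ∃ j, LdimGe V j ∧ ¬LdimGe (labelled V x c) j := by
    simpa [LdimLE] using mt (soaPrediction_eq_some_iff hV hbdd).2 hc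
  rcases le_or_gt j k with hjk | hkj
  · exact hjc (hk.of_le hjk)
  · exact hbdd (hj.of_le hkj)

lemma exists_mem_agree_soaPrediction (hV : V.Nonempty) (hbdd : ¬LdimGe V n) (x y : X) :
    ∃ f ∈ V, (∀ b, soaPrediction V x = some b → f x = b) ∧
      (∀ b, soaPrediction V y = some b → f y = b) := by
  have : Nonempty X := ⟨x⟩
  set A := {f ∈ V | ∀ b, soaPrediction V x = some b → f x = b}
  have hA : LdimLE V A := by
    intro k hk
    cases hx : soaPrediction V x with
    | none => exact hk.mono fun f hf => ⟨hf, by simp [hx]⟩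
    | some b =>
      exact ((soaPrediction_eq_some_iff hV hbdd).1 hx k hk).mono fun f hf =>
        ⟨hf.1, by simp [hx, hf.2]⟩
  obtain ⟨f, hfV, hfx⟩ := (hA 0 (ldimGe_zero hV)).nonempty
  cases hy : soaPrediction V y with
  | none => exact ⟨f, hfV, hfx, by simp⟩
  | some b =>
    by_contra hno
    have hAy : A ⊆ labelled V y (!b) := fun g hg =>
      ⟨hg.1, Bool.eq_not_iff.2 fun hgy => hno ⟨g, hg.1, hg.2, by simp [hgy]⟩⟩
    have hb := (soaPrediction_eq_some_iff hV hbdd).1 hy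
    have hnb : LdimLE V (labelled V y (!b)) := fun k hk => (hA k hk).mono hAy
    cases b
    · exact not_ldimLE_labelled_true_and_false hV hbdd y ⟨hnb, hb⟩
    · exact not_ldimLE_labelled_true_and_false hV hbdd y ⟨hb, hnb⟩

lemma nConsistent_soaPrediction [Nonempty X] (hVC : V ⊆ C) (hV : V.Nonempty)
    (hbdd : ¬LdimGe V n) : NConsistent C (soaPrediction V) 2 :=
  nConsistent_two fun x y =>
    let ⟨f, hf, hfxy⟩ := exists_mem_agree_soaPrediction hV hbdd x y
    ⟨f, hVC hf, hfxy⟩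

end SOA

section EQLearning

variable {X : Type*} {C H V : Set (X → Bool)} {d k : ℕ}

lemma validEQPlay_cons_iff {g : X → Bool} {s : List X → X → Bool} {x : X} {xs : List X} :
    ValidEQPlay g s (x :: xs) ↔ s [] x ≠ g x ∧ ValidEQPlay g (fun l => s (x :: l)) xs := by
  constructor
  · intro h
    exact ⟨h 0 (Nat.succ_pos _), fun i hi => by simpa using h (i + 1) (by simpa using hi)⟩
  · rintro ⟨h0, h⟩ i hi
    cases i with
    | zero => simpa using h0
    | succ i => simpa using h i (by simpa using hi)

lemma EQLearnIn.mono {m n : ℕ} (hmn : m ≤ n) (h : EQLearnIn C H m) : EQLearnIn C H n := by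
  obtain ⟨s, hsH, hs⟩ := h
  exact ⟨s, hsH, fun g hg xs hxs => (hs g hg xs hxs).trans_le hmn⟩

lemma LdimGe.exists_validEQPlay (h : LdimGe C d) (s : List X → X → Bool) :
    ∃ g ∈ C, ∃ xs : List X, ValidEQPlay g s xs ∧ xs.length = d := by
  induction d generalizing C s with
  | zero =>
    obtain ⟨g, hg⟩ := h.nonempty
    exact ⟨g, hg, [], fun i hi => absurd hi (Nat.not_lt_zero i), rfl⟩
  | succ d ih =>
    obtain ⟨x, hx⟩ := ldimGe_succ_iff.1 h
    obtain ⟨g, ⟨hg, hgx⟩, xs, hxs, hlen⟩ := ih (hx (!s [] x)) fun l => s (x :: l)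
    exact ⟨g, hg, x :: xs, validEQPlay_cons_iff.2 ⟨by simp [hgx], hxs⟩, by simp [hlen]⟩

lemma not_eqLearnIn_of_ldimGe (h : LdimGe C d) : ¬EQLearnIn C H d := by
  rintro ⟨s, -, hs⟩
  obtain ⟨g, hg, xs, hxs, hlen⟩ := h.exists_validEQPlay s
  exact (hs g hg xs hxs).ne hlen

variable (H) (B₀ : X → Bool)

open Classical in
noncomputable def soaHypothesis (V : Set (X → Bool)) : X → Bool :=
  if h : ∃ B ∈ H, PExtends B (soaPrediction V) then h.choose else B₀

/-- Littlestone's Standard Optimal Algorithm with its partial prediction completed to a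
hypothesis of `H`; the first argument is the current version space. -/
noncomputable def soaLearner : Set (X → Bool) → List X → X → Bool
  | V, [] => soaHypothesis H B₀ V
  | V, x :: l => soaLearner (labelled V x (!soaHypothesis H B₀ V x)) l

variable {H B₀}

lemma soaHypothesis_mem (hB₀ : B₀ ∈ H) (V : Set (X → Bool)) : soaHypothesis H B₀ V ∈ H := by
  unfold soaHypothesis
  split_ifs with h
  exacts [h.choose_spec.1, hB₀]

lemma soaHypothesis_pExtends (h : ∃ B ∈ H, PExtends B (soaPrediction V)) :
    PExtends (soaHypothesis H B₀ V) (soaPrediction V) := by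
  rw [soaHypothesis, dif_pos h]
  exact h.choose_spec.2

lemma soaLearner_mem (hB₀ : B₀ ∈ H) (V : Set (X → Bool)) (l : List X) :
    soaLearner H B₀ V l ∈ H := by
  induction l generalizing V with
  | nil => exact soaHypothesis_mem hB₀ V
  | cons x l ih => exact ih _

lemma length_lt_of_validEQPlay_soaLearner [Nonempty X] (hSC : SCDimLe C H 2) {g : X → Bool}
    {xs : List X} (hVC : V ⊆ C) (hg : g ∈ V) (hbdd : ¬LdimGe V k)
    (hxs : ValidEQPlay g (soaLearner H B₀ V) xs) : xs.length < k := by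
  induction xs generalizing V k with
  | nil => exact pos_of_not_ldimGe ⟨g, hg⟩ hbdd
  | cons x xs ih =>
    obtain ⟨k, rfl⟩ := Nat.exists_eq_add_one.2 (pos_of_not_ldimGe ⟨g, hg⟩ hbdd)
    obtain ⟨hx, hxs⟩ := validEQPlay_cons_iff.1 hxs
    have hgx : g x = !soaHypothesis H B₀ V x := Bool.eq_not_iff.2 hx.symm
    have hpred : soaPrediction V x ≠ some (g x) := fun h =>
      hx (soaHypothesis_pExtends (hSC _ (nConsistent_soaPrediction hVC ⟨g, hg⟩ hbdd)) _ _ h)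
    have hnext := not_ldimGe_labelled hbdd hpred
    rw [hgx] at hnext
    simpa using ih ((labelled_subset x _).trans hVC) ⟨hg, hgx⟩ hnext hxs

lemma eqLearnIn_succ_of_sCDimLe_two [Nonempty X] (hB₀ : B₀ ∈ H) (hSC : SCDimLe C H 2)
    (hC : ¬LdimGe C (d + 1)) : EQLearnIn C H (d + 1) :=
  ⟨soaLearner H B₀ C, soaLearner_mem hB₀ C, fun _ hg _ hxs =>
    length_lt_of_validEQPlay_soaLearner hSC subset_rfl hg hC hxs⟩

end EQLearning

theorem stmt_13_general {X : Type*} (C H : Set (X → Bool)) (d : ℕ)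
    (hd : Ldim C = (d : ℕ∞)) (hSC : SCDim C H = (2 : ℕ∞)) :
    LCEQ C H = (d : ℕ∞) + 1 := by
  obtain ⟨hSC2, hSC_min⟩ := sInf_natSet_eq_coe_iff.1 hSC
  obtain ⟨A, hA, hAH⟩ : ∃ A, NConsistent C A 1 ∧ ¬∃ B ∈ H, PExtends B A := by
    simpa [SCDimLe] using hSC_min 1 one_lt_two
  obtain ⟨f, hf, -⟩ := hA ∅ (Nat.zero_le 1)
  obtain ⟨B₀, hB₀, -⟩ := hSC2 (fun _ => none) fun _ _ => ⟨f, hf, by simp⟩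
  have : Nonempty X := by
    by_contra hX
    exact hAH ⟨B₀, hB₀, fun x => (hX ⟨x⟩).elim⟩
  obtain ⟨hCd, hCd1⟩ := sSup_natSet_eq_coe hd ⟨0, ldimGe_zero ⟨f, hf⟩⟩
  have hlearn := eqLearnIn_succ_of_sCDimLe_two hB₀ hSC2 (hCd1 (d + 1) d.lt_succ_self)
  have hnlearn := not_eqLearnIn_of_ldimGe (H := H) hCd
  rw [LCEQ, ← Nat.cast_succ, sInf_natSet_eq_coe_iff]
  exact ⟨hlearn, fun m hm hm' => hnlearn (hm'.mono (Nat.le_of_lt_succ hm))⟩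

theorem stmt_13 {X : Type*} (C H : Set (X → Bool)) (hCH : C ⊆ H) (d : ℕ)
    (hd : Ldim C = (d : ℕ∞)) (hSC : SCDim C H = (2 : ℕ∞)) :
    LCEQ C H = (d : ℕ∞) + 1 :=
  stmt_13_general C H d hd hSC
end

section
/- Let X be a finite set, C a nonempty finite concept class on X, and μ a probability measure on X with μ(x) > 0 for all x ∈ X. Define d(A,B) as the expected value of Ldim(C) − Ldim(C_{x = B(x)}) for x drawn from μ conditioned on the symmetric difference Δ(A,B), for distinct A, B ∈ C. Then there is at least one concept A ∈ C whose query rank inf_{B ∈ C, B ≠ A} d(A,B) is at least 1/2. -/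
/-- The weight `d(A,B)` of the directed edge from `A` to `B` in the thicket query
graph: the expected value of `Ldim C − Ldim C_{x = B(x)}` for `x` drawn from `μ`
conditioned on the symmetric difference `Δ(A,B)`. -/
noncomputable def edgeWeight {X : Type*} [Fintype X] (C : Set (X → Bool))
    (μ : X → ℝ) (A B : X → Bool) : ℝ :=
  ∑ a ∈ Finset.univ.filter (fun x => A x ≠ B x),
    (μ a / ∑ b ∈ Finset.univ.filter (fun x => A x ≠ B x), μ b) *
      (((Ldim C).toNat : ℝ) - ((Ldim {f ∈ C | f a = B a}).toNat : ℝ))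

/-!
Let `ℓ x b` be the Littlestone dimension of `C_{x=b}` and `L = Ldim C`. If two concepts differ
at `x`, both restrictions are nonempty, so the smaller one has dimension `< L` (two trees of the
smaller height hang below a root labelled `x`) and the larger one `≤ L`; hence
`ℓ x (A x) + ℓ x (B x) + 1 ≤ 2 L`. Take `A ∈ C` maximising `∑ₓ μ x ℓ x (A x)`. For any other
`B ∈ C` the two sums agree off `Δ(A,B)`, so `∑_{Δ} μ ℓ(B) ≤ ∑_{Δ} μ ℓ(A)`, and averaging the
inequality above over `Δ` gives `∑_{Δ} μ (L - ℓ(B)) ≥ μ(Δ) / 2`, i.e. `d(A,B) ≥ 1/2`.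
-/

open Finset

namespace LdimGe

variable {X : Type*} {C D : Set (X → Bool)} {d : ℕ}

lemma mono_s18 (hC : LdimGe C d) (h : C ⊆ D) : LdimGe D d := by
  obtain ⟨t, ht⟩ := hC
  exact ⟨t, fun σ hσ => by obtain ⟨f, hf, hfk⟩ := ht σ hσ; exact ⟨f, h hf, hfk⟩⟩

lemma nonempty_s18 (h : LdimGe C d) : C.Nonempty := by
  obtain ⟨t, ht⟩ := h
  obtain ⟨f, hf, -⟩ := ht (List.replicate d false) (by simp)
  exact ⟨f, hf⟩

lemma of_le_s18 (hC : LdimGe C d) {d' : ℕ} (h : d' ≤ d) : LdimGe C d' := by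
  obtain ⟨t, ht⟩ := hC
  refine ⟨t, fun σ hσ => ?_⟩
  -- pad the branch `σ` to a leaf of the taller tree
  obtain ⟨f, hf, hfk⟩ := ht (σ ++ List.replicate (d - d') false) (by simp [hσ]; omega)
  refine ⟨f, hf, fun k hk => ?_⟩
  have htake : (σ ++ List.replicate (d - d') false).take k = σ.take k :=
    List.take_append_of_le_length (by omega)
  have hget : (σ ++ List.replicate (d - d') false).getD k false = σ.getD k false := by
    simp only [List.getD, List.getElem?_append_left (show k < σ.length by omega)]
  simpa only [htake, hget] using hfk k (by omega)

lemma succ_of_restrict {x : X} {b b' : Bool} (hbb' : b ≠ b') (h : LdimGe {f ∈ C | f x = b} d)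
    (h' : LdimGe {f ∈ C | f x = b'} d) : LdimGe C (d + 1) := by
  wlog hb : b = false generalizing b b'
  · exact this hbb'.symm h' h (by cases b <;> cases b' <;> simp_all)
  obtain rfl : b' = true := by simpa [hb] using hbb'.symm
  subst hb
  obtain ⟨t0, ht0⟩ := h
  obtain ⟨t1, ht1⟩ := h'
  refine ⟨fun
    | [] => x
    | b :: p => cond b (t1 p) (t0 p), fun σ hσ => ?_⟩
  obtain _ | ⟨b, σ⟩ := σ
  · simp at hσ
  have hσ' : σ.length = d := by simpa using hσ
  obtain ⟨f, ⟨hfC, hfx⟩, hfk⟩ : ∃ f ∈ {f ∈ C | f x = b}, ∀ k < d,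
      f (cond b (t1 (σ.take k)) (t0 (σ.take k))) = σ.getD k false := by
    cases b
    · exact ht0 σ hσ'
    · exact ht1 σ hσ'
  refine ⟨f, hfC, fun k hk => ?_⟩
  cases k with
  | zero => simpa using hfx
  | succ j => simpa using hfk j (by omega)

lemma exists_restrict (h : LdimGe C (d + 1)) :
    ∃ x : X, LdimGe {f ∈ C | f x = false} d ∧ LdimGe {f ∈ C | f x = true} d := by
  obtain ⟨t, ht⟩ := h
  have subtree : ∀ b : Bool, LdimGe {f ∈ C | f (t []) = b} d := fun b => by
    refine ⟨fun p => t (b :: p), fun σ hσ => ?_⟩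
    obtain ⟨f, hf, hfk⟩ := ht (b :: σ) (by simp [hσ])
    exact ⟨f, ⟨hf, by simpa using hfk 0 (by omega)⟩,
      fun j hj => by simpa using hfk (j + 1) (by omega)⟩
  exact ⟨t [], subtree false, subtree true⟩

lemma lt_ncard (h : LdimGe C d) (hfin : C.Finite) : d < C.ncard := by
  induction d generalizing C with
  | zero => exact (Set.ncard_pos hfin).mpr h.nonempty_s18
  | succ d ih =>
    obtain ⟨x, h0, h1⟩ := h.exists_restrict
    have hsplit : C.ncard = {f ∈ C | f x = false}.ncard + {f ∈ C | f x = true}.ncard := by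
      rw [← Set.ncard_union_eq _ (hfin.subset fun f hf => hf.1) (hfin.subset fun f hf => hf.1)]
      · congr 1
        ext f
        cases hfx : f x <;> simp [hfx]
      · exact Set.disjoint_left.mpr fun f hf hf' => by simp_all
    have := ih h0 (hfin.subset fun f hf => hf.1)
    have := ih h1 (hfin.subset fun f hf => hf.1)
    omega

end LdimGe

section Ldim

variable {X : Type*} {C : Set (X → Bool)}

lemma ldim_le_ncard (hfin : C.Finite) : Ldim C ≤ C.ncard :=
  sSup_le fun _ ⟨_, hn, hd⟩ => hn ▸ by exact_mod_cast (hd.lt_ncard hfin).le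

lemma le_toNat_ldim (hfin : C.Finite) {d : ℕ} (h : LdimGe C d) : d ≤ (Ldim C).toNat := by
  have hd : (d : ℕ∞) ≤ Ldim C := le_sSup ⟨d, rfl, h⟩
  simpa using ENat.toNat_le_toNat hd
    (ne_top_of_le_ne_top (ENat.natCast_ne_top _) (ldim_le_ncard hfin))

lemma ldimGe_toNat_ldim [Nonempty X] (hfin : C.Finite) (hne : C.Nonempty) :
    LdimGe C (Ldim C).toNat := by
  have hheights : {d | LdimGe C d}.Finite :=
    (Set.finite_lt_nat C.ncard).subset fun d hd => hd.lt_ncard hfin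
  have hzero : LdimGe C 0 :=
    ⟨fun _ => Classical.arbitrary X, fun _ _ => ⟨hne.some, hne.some_mem, by simp⟩⟩
  obtain ⟨d, hd, hdC⟩ : Ldim C ∈ {n : ℕ∞ | ∃ d : ℕ, n = d ∧ LdimGe C d} := by
    refine Set.Nonempty.csSup_mem ⟨0, 0, rfl, hzero⟩ ?_
    refine (hheights.image ((↑) : ℕ → ℕ∞)).subset ?_
    rintro _ ⟨d, rfl, hd⟩
    exact ⟨d, hd, rfl⟩
  simpa [hd] using hdC

lemma toNat_ldim_restrict_add_lt_two_mul (hfin : C.Finite) {A B : X → Bool} (hA : A ∈ C) (hB : B ∈ C)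
    {x : X} (hx : A x ≠ B x) :
    (Ldim {f ∈ C | f x = A x}).toNat + (Ldim {f ∈ C | f x = B x}).toNat
      < 2 * (Ldim C).toNat := by
  have : Nonempty X := ⟨x⟩
  have hrestrict : ∀ f ∈ C, LdimGe {g ∈ C | g x = f x} (Ldim {g ∈ C | g x = f x}).toNat :=
    fun f hf => ldimGe_toNat_ldim (hfin.subset fun g hg => hg.1) ⟨f, hf, rfl⟩
  have hle : ∀ f ∈ C, (Ldim {g ∈ C | g x = f x}).toNat ≤ (Ldim C).toNat :=
    fun f hf => le_toNat_ldim hfin ((hrestrict f hf).mono_s18 fun g hg => hg.1)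
  have hmin : min (Ldim {f ∈ C | f x = A x}).toNat (Ldim {f ∈ C | f x = B x}).toNat + 1
      ≤ (Ldim C).toNat :=
    le_toNat_ldim hfin (LdimGe.succ_of_restrict hx
      ((hrestrict A hA).of_le_s18 (min_le_left _ _)) ((hrestrict B hB).of_le_s18 (min_le_right _ _)))
  have := hle A hA
  have := hle B hB
  omega

end Ldim

lemma Finset.sum_filter_ne_le_of_sum_le {X β : Type*} [Fintype X] {f g : X → β}
    [DecidableEq β] {F : X → β → ℝ} (h : ∑ x, F x (g x) ≤ ∑ x, F x (f x)) :
    ∑ x ∈ univ.filter (fun x => f x ≠ g x), F x (g x)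
      ≤ ∑ x ∈ univ.filter (fun x => f x ≠ g x), F x (f x) := by
  have hoff : ∑ x ∈ univ.filter (fun x => ¬f x ≠ g x), F x (g x)
      = ∑ x ∈ univ.filter (fun x => ¬f x ≠ g x), F x (f x) :=
    sum_congr rfl fun x hx => by rw [not_not.mp (mem_filter.mp hx).2]
  rw [← sum_filter_add_sum_filter_not univ (fun x => f x ≠ g x),
    ← sum_filter_add_sum_filter_not univ (fun x => f x ≠ g x), hoff] at h
  linarith

lemma Finset.sum_le_two_mul_sum_mul_sub {ι : Type*} {s : Finset ι} {w p q : ι → ℝ} {L : ℝ}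
    (hw : ∀ i ∈ s, 0 ≤ w i) (hpq : ∀ i ∈ s, p i + q i + 1 ≤ 2 * L)
    (hqp : ∑ i ∈ s, w i * q i ≤ ∑ i ∈ s, w i * p i) :
    ∑ i ∈ s, w i ≤ 2 * ∑ i ∈ s, w i * (L - q i) := by
  have hsum : ∑ i ∈ s, w i * (p i + q i + 1) ≤ ∑ i ∈ s, w i * (2 * L) :=
    sum_le_sum fun i hi => mul_le_mul_of_nonneg_left (hpq i hi) (hw i hi)
  have hlhs : ∑ i ∈ s, w i * (p i + q i + 1)
      = ∑ i ∈ s, w i * p i + ∑ i ∈ s, w i * q i + ∑ i ∈ s, w i := by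
    rw [← sum_add_distrib, ← sum_add_distrib]
    exact sum_congr rfl fun _ _ => by ring
  have hrhs : 2 * ∑ i ∈ s, w i * (L - q i)
      = ∑ i ∈ s, w i * (2 * L) - 2 * ∑ i ∈ s, w i * q i := by
    rw [mul_sum, mul_sum, ← sum_sub_distrib]
    exact sum_congr rfl fun _ _ => by ring
  linarith

lemma edgeWeight_eq_div {X : Type*} [Fintype X] (C : Set (X → Bool)) (μ : X → ℝ)
    (A B : X → Bool) :
    edgeWeight C μ A B =
      (∑ a ∈ univ.filter (fun x => A x ≠ B x),
        μ a * (((Ldim C).toNat : ℝ) - ((Ldim {f ∈ C | f a = B a}).toNat : ℝ))) /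
      ∑ b ∈ univ.filter (fun x => A x ≠ B x), μ b := by
  rw [edgeWeight, sum_div]
  exact sum_congr rfl fun _ _ => by ring

theorem stmt_18_general {X : Type*} [Fintype X] (C : Set (X → Bool)) (hfin : C.Finite)
    (hne : C.Nonempty) (μ : X → ℝ) (hpos : ∀ x, 0 < μ x) :
    ∃ A ∈ C, ∀ B ∈ C, B ≠ A → (1 : ℝ) / 2 ≤ edgeWeight C μ A B := by
  let ℓ : X → Bool → ℝ := fun x b => (Ldim {f ∈ C | f x = b}).toNat
  obtain ⟨A, hA, hmax⟩ := Set.exists_max_image C (fun f => ∑ x, μ x * ℓ x (f x)) hfin hne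
  refine ⟨A, hA, fun B hB hBA => ?_⟩
  obtain ⟨x₀, hx₀⟩ := Function.ne_iff.mp (Ne.symm hBA)
  have hΔ : 0 < ∑ b ∈ univ.filter (fun x => A x ≠ B x), μ b :=
    sum_pos (fun b _ => hpos b) ⟨x₀, by simpa using hx₀⟩
  rw [edgeWeight_eq_div, le_div_iff₀ hΔ]
  have key := sum_le_two_mul_sum_mul_sub (L := (Ldim C).toNat) (p := fun a => ℓ a (A a))
    (fun a _ => (hpos a).le) (fun a ha => by
      simp only [ℓ]
      exact_mod_cast toNat_ldim_restrict_add_lt_two_mul hfin hA hB (mem_filter.mp ha).2)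
    (sum_filter_ne_le_of_sum_le (F := fun x b => μ x * ℓ x b) (hmax B hB))
  linarith

theorem stmt_18 {X : Type*} [Fintype X] (C : Set (X → Bool)) (hfin : C.Finite)
    (hne : C.Nonempty) (μ : X → ℝ) (hpos : ∀ x, 0 < μ x) (hsum : ∑ x, μ x = 1) :
    ∃ A ∈ C, ∀ B ∈ C, B ≠ A → (1 : ℝ) / 2 ≤ edgeWeight C μ A B :=
  stmt_18_general C hfin hne μ hpos
end
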